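/- The expected largest gap g(l,N) is monotone non-increasing in the number of destinations: for 0 ≤ l ≤ N-2, g(l+1,N) ≤ g(l,N). -/
import Mathlib


noncomputable section

/-- The node reached from `x` by moving `d` segments clockwise on an `N`-node ring. -/
def wrap {N : ℕ} (x : Fin N) (d : ℕ) : Fin N := ⟨(x.1 + d) % N, Nat.mod_lt _ x.pos⟩

/-- The clockwise gap at node `x` with respect to the active set `A`:
the distance from `x` to the next active node clockwise. -/
def gapLen {N : ℕ} (A : Finset (Fin N)) (x : Fin N) : ℕ :=
  sInf {d : ℕ | 0 < d ∧ wrap x d ∈ A}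

/-- The length of the largest gap of the active set `A`. -/
def maxGap {N : ℕ} (A : Finset (Fin N)) : ℕ := A.sup (gapLen A)

/-- The set of active nodes at which a gap of maximal length starts (clockwise). -/
def maxSet {N : ℕ} (A : Finset (Fin N)) : Finset (Fin N) :=
  A.filter (fun x => gapLen A x = maxGap A)

/-- Clockwise hop distance from `a` to `b`. -/
def dCw {N : ℕ} (a b : Fin N) : ℕ := (b.1 + N - a.1) % N

/-- Probability (over the uniform tie-break among maximal gaps) that the chosen
largest gap of active set `A` starts (clockwise) at node `g`. -/
def clgStartProb {N : ℕ} (A : Finset (Fin N)) (g : Fin N) : ℚ :=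
  if g ∈ maxSet A then 1 / ((maxSet A).card : ℚ) else 0

/-- Probability (over the uniform tie-break among maximal gaps) that the clockwise
segment entering node `m` is traversed under shortest-path routing, when the
active set is `A` and the sender is `S`: the clockwise copy travels from `S` to the
start of the chosen largest gap. -/
def segUseProb {N : ℕ} (A : Finset (Fin N)) (S m : Fin N) : ℚ :=
  (((maxSet A).filter (fun g => 1 ≤ dCw S m ∧ dCw S m ≤ dCw S g)).card : ℚ) /
    ((maxSet A).card : ℚ)

/-- The nodes of an `N`-node ring homed on wavelength `lam` (out of `Λ` wavelengths):
those whose index is congruent to `lam` modulo `Λ`. -/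
def homed (N Λ lam : ℕ) : Finset (Fin N) :=
  Finset.univ.filter (fun i => i.1 % Λ = lam % Λ)

end

noncomputable section

variable {N : ℕ}

lemma wrap_val {x : Fin N} {d : ℕ} : (wrap x d).1 = (x.1 + d) % N := rfl

lemma wrap_N (x : Fin N) : wrap x N = x := by
  apply Fin.ext
  simp [wrap_val, Nat.add_mod_right, Nat.mod_eq_of_lt x.2]

lemma wrap_add (x : Fin N) (a b : ℕ) : wrap (wrap x a) b = wrap x (a + b) := by
  apply Fin.ext
  simp only [wrap_val, Nat.mod_add_mod, Nat.add_assoc]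

lemma wrap_add_N (x : Fin N) (d : ℕ) : wrap x (N + d) = wrap x d := by
  apply Fin.ext
  simp only [wrap_val]
  rw [show x.1 + (N + d) = (x.1 + d) + N by omega, Nat.add_mod_right]

lemma wrap_zero (x : Fin N) : wrap x 0 = x :=
  Fin.ext (by simp [wrap_val, Nat.mod_eq_of_lt x.2])

lemma gapset_nonempty {A : Finset (Fin N)} (hA : A.Nonempty) (x : Fin N) :
    ∃ d, (0 < d ∧ wrap x d ∈ A) ∧ d ≤ N := by
  obtain ⟨a, ha⟩ := hA
  by_cases hax : a = x
  · exact ⟨N, ⟨x.pos, by rw [wrap_N]; exact hax ▸ ha⟩, le_rfl⟩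
  · refine ⟨(a.1 + N - x.1) % N, ⟨?_, ?_⟩, le_of_lt (Nat.mod_lt _ x.pos)⟩
    · rcases Nat.eq_zero_or_pos ((a.1 + N - x.1) % N) with h | h
      swap
      · exact h
      · exfalso
        have hx := x.2; have ha2 := a.2
        have : (a.1 + N - x.1) % N = 0 := h
        have hd : a.1 + N - x.1 < 2 * N := by omega
        have hd2 : 0 < a.1 + N - x.1 := by omega
        rcases Nat.lt_or_ge (a.1 + N - x.1) N with h1 | h1
        · rw [Nat.mod_eq_of_lt h1] at this; omega
        · have : (a.1 + N - x.1 - N) % N = 0 := by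
            rw [← this]; conv_rhs => rw [← Nat.sub_add_cancel h1, Nat.add_mod_right]
          rw [Nat.mod_eq_of_lt (by omega)] at this
          exact hax (Fin.ext (by omega))
    · have : wrap x ((a.1 + N - x.1) % N) = a := by
        apply Fin.ext
        simp only [wrap_val, Nat.add_mod_mod]
        have hx := x.2
        rw [show x.1 + (a.1 + N - x.1) = a.1 + N by omega, Nat.add_mod_right,
          Nat.mod_eq_of_lt a.2]
      rw [this]; exact ha

lemma gapLen_pos {A : Finset (Fin N)} (hA : A.Nonempty) (x : Fin N) :
    0 < gapLen A x ∧ wrap x (gapLen A x) ∈ A := by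
  obtain ⟨d, hd, _⟩ := gapset_nonempty hA x
  have hne : {d : ℕ | 0 < d ∧ wrap x d ∈ A}.Nonempty := ⟨d, hd⟩
  exact Nat.sInf_mem hne

lemma gapLen_le {A : Finset (Fin N)} {x : Fin N} {d : ℕ} (h1 : 0 < d) (h2 : wrap x d ∈ A) :
    gapLen A x ≤ d := Nat.sInf_le ⟨h1, h2⟩

lemma notMem_of_lt_gapLen {A : Finset (Fin N)} {x : Fin N} {j : ℕ} (h1 : 0 < j)
    (h2 : j < gapLen A x) : wrap x j ∉ A := fun hm =>
  absurd (gapLen_le h1 hm) (by omega)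

lemma gapLen_lt_of_notMem {A : Finset (Fin N)} (hA : A.Nonempty) {x : Fin N} (hx : x ∉ A) :
    gapLen A x < N := by
  obtain ⟨d, hd, hdN⟩ := gapset_nonempty hA x
  rcases Nat.lt_or_ge d N with h | h
  · exact lt_of_le_of_lt (gapLen_le hd.1 hd.2) h
  · exfalso; have : d = N := le_antisymm hdN h
    rw [this, wrap_N] at hd; exact hx hd.2

lemma gapLen_step {A : Finset (Fin N)} (hA : A.Nonempty) {x : Fin N} (hx : x ∉ A) :
    gapLen A (wrap x (N - 1)) = gapLen A x + 1 := by
  have hN : 0 < N := x.pos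
  set c := gapLen A x with hc
  obtain ⟨hcpos, hcmem⟩ := gapLen_pos hA x
  have key : ∀ j, wrap (wrap x (N - 1)) (j + 1) = wrap x j := by
    intro j
    rw [wrap_add, show N - 1 + (j + 1) = N + j by omega, wrap_add_N]
  apply le_antisymm
  · exact gapLen_le (Nat.succ_pos c) (by rw [key]; exact hcmem)
  · by_contra h
    push_neg at h
    obtain ⟨hpos, hmem⟩ := gapLen_pos hA (wrap x (N - 1))
    set e := gapLen A (wrap x (N - 1)) with he
    have hje : e = (e - 1) + 1 := by omega
    rw [hje, key] at hmem
    rcases Nat.eq_or_lt_of_le (Nat.one_le_iff_ne_zero.mpr (Nat.pos_iff_ne_zero.mp hpos)) with h1 | h1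
    · rw [show e - 1 = 0 from by omega] at hmem
      rw [wrap_zero] at hmem; exact hx hmem
    · exact notMem_of_lt_gapLen (by omega) (by omega) hmem

lemma gapLen_le_exists {A : Finset (Fin N)} (hA : A.Nonempty) :
    ∀ n (x : Fin N), N ≤ gapLen A x + n → ∃ y ∈ A, gapLen A x ≤ gapLen A y := by
  intro n
  induction n with
  | zero =>
    intro x h
    by_cases hx : x ∈ A
    · exact ⟨x, hx, le_rfl⟩
    · exact absurd (gapLen_lt_of_notMem hA hx) (by omega)
  | succ n ih =>
    intro x h
    by_cases hx : x ∈ A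
    · exact ⟨x, hx, le_rfl⟩
    · obtain ⟨y, hy, hle⟩ := ih (wrap x (N - 1)) (by rw [gapLen_step hA hx]; omega)
      exact ⟨y, hy, le_trans (by rw [gapLen_step hA hx] at hle ⊢; omega) hle⟩

lemma gapLen_le_maxGap {A : Finset (Fin N)} (hA : A.Nonempty) (x : Fin N) :
    gapLen A x ≤ maxGap A := by
  obtain ⟨y, hy, hle⟩ := gapLen_le_exists hA N x (by omega)
  exact le_trans hle (Finset.le_sup hy)

lemma maxGap_anti {A B : Finset (Fin N)} (hA : A.Nonempty) (hAB : A ⊆ B) :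
    maxGap B ≤ maxGap A := by
  apply Finset.sup_le
  intro x _
  obtain ⟨hpos, hmem⟩ := gapLen_pos hA x
  exact le_trans (gapLen_le hpos (hAB hmem)) (gapLen_le_maxGap hA x)

open Finset in
lemma superset_count {l : ℕ} {A : Finset (Fin N)} (hcard : A.card = l + 1) (hN : l + 2 ≤ N) :
    (((Finset.univ : Finset (Fin N)).powersetCard (l + 2)).filter (fun B => A ⊆ B)).card
      = N - (l + 1) := by
  have himg : ((Finset.univ : Finset (Fin N)).powersetCard (l + 2)).filter (fun B => A ⊆ B)
      = Aᶜ.image (fun x => insert x A) := by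
    ext B
    simp only [mem_filter, mem_powersetCard, mem_image, mem_compl]
    constructor
    · rintro ⟨⟨-, hBcard⟩, hAB⟩
      have h1 : (B \ A).card = 1 := by
        rw [card_sdiff_of_subset hAB, hBcard, hcard]
        omega
      obtain ⟨x, hx⟩ := card_eq_one.mp h1
      have hxB : x ∈ B \ A := hx ▸ mem_singleton_self x
      refine ⟨x, (mem_sdiff.mp hxB).2, ?_⟩
      refine eq_of_subset_of_card_le (insert_subset (mem_sdiff.mp hxB).1 hAB) ?_
      rw [card_insert_of_notMem (mem_sdiff.mp hxB).2, hcard, hBcard]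
    · rintro ⟨x, hx, rfl⟩
      exact ⟨⟨subset_univ _, by rw [card_insert_of_notMem hx, hcard]⟩, subset_insert _ _⟩
  rw [himg, card_image_of_injOn, card_compl, hcard, Fintype.card_fin]
  intro x hx y hy hxy
  simp only [coe_compl, Set.mem_compl_iff, mem_coe] at hx hy
  have hxy' : insert x A = insert y A := hxy
  have : x ∈ insert y A := hxy' ▸ mem_insert_self x A
  rcases mem_insert.mp this with h | h
  · exact h
  · exact absurd h hx

open Finset in
lemma key_ineq (N l : ℕ) (hN : l + 2 ≤ N) :
    ((l : ℚ) + 2) * ∑ B ∈ (Finset.univ : Finset (Fin N)).powersetCard (l + 2), (maxGap B : ℚ)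
      ≤ ((N - (l + 1) : ℕ) : ℚ) *
        ∑ A ∈ (Finset.univ : Finset (Fin N)).powersetCard (l + 1), (maxGap A : ℚ) := by
  have step1 : ((l : ℚ) + 2) * ∑ B ∈ (Finset.univ : Finset (Fin N)).powersetCard (l + 2),
      (maxGap B : ℚ) = ∑ B ∈ (Finset.univ : Finset (Fin N)).powersetCard (l + 2),
        ∑ A ∈ B.powersetCard (l + 1), (maxGap B : ℚ) := by
    rw [mul_sum]
    refine sum_congr rfl fun B hB => ?_
    rw [sum_const, card_powersetCard, (mem_powersetCard.mp hB).2,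
      Nat.choose_succ_self_right, nsmul_eq_mul]
    push_cast; ring
  rw [step1]
  have step2 : ∑ B ∈ (Finset.univ : Finset (Fin N)).powersetCard (l + 2),
      ∑ A ∈ B.powersetCard (l + 1), (maxGap B : ℚ)
      ≤ ∑ B ∈ (Finset.univ : Finset (Fin N)).powersetCard (l + 2),
        ∑ A ∈ B.powersetCard (l + 1), (maxGap A : ℚ) := by
    refine sum_le_sum fun B hB => sum_le_sum fun A hA => ?_
    have hAB := (mem_powersetCard.mp hA).1
    have hAcard := (mem_powersetCard.mp hA).2
    have hAne : A.Nonempty := card_pos.mp (by omega)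
    exact_mod_cast maxGap_anti hAne hAB
  refine le_trans step2 ?_
  have step3 : ∑ B ∈ (Finset.univ : Finset (Fin N)).powersetCard (l + 2),
      ∑ A ∈ B.powersetCard (l + 1), (maxGap A : ℚ)
      = ∑ A ∈ (Finset.univ : Finset (Fin N)).powersetCard (l + 1),
        ∑ B ∈ ((Finset.univ : Finset (Fin N)).powersetCard (l + 2)).filter
          (fun B => A ⊆ B), (maxGap A : ℚ) := by
    refine sum_comm' fun B A => ?_
    simp only [mem_powersetCard, mem_filter, subset_univ, true_and]
    tauto
  rw [step3, mul_sum]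
  refine sum_le_sum fun A hA => ?_
  rw [sum_const, superset_count (mem_powersetCard.mp hA).2 hN, nsmul_eq_mul]


/-- `gExp l N` : expected length of the largest gap determined by a uniformly random
`(l+1)`-subset of an `N`-node ring. -/
def gExp (l N : ℕ) : ℚ :=
  (∑ A ∈ (Finset.univ : Finset (Fin N)).powersetCard (l + 1), (maxGap A : ℚ)) /
    (N.choose (l + 1) : ℚ)

/-- The expected largest gap is monotone non-increasing in the number
of destinations: for `0 ≤ l ≤ N-2`, `g(l+1,N) ≤ g(l,N)`. -/
theorem stmt3 (N l : ℕ) (hN : 2 ≤ N) (hl : l ≤ N - 2) : gExp (l + 1) N ≤ gExp l N := by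
  have hl2 : l + 2 ≤ N := by omega
  have hc1 : 0 < N.choose (l + 1) := Nat.choose_pos (by omega)
  have hc2 : 0 < N.choose (l + 2) := Nat.choose_pos hl2
  have hq1 : (0 : ℚ) < (N.choose (l + 1) : ℚ) := by exact_mod_cast hc1
  have hq2 : (0 : ℚ) < (N.choose (l + 2) : ℚ) := by exact_mod_cast hc2
  rw [gExp, gExp, div_le_div_iff₀ hq2 hq1]
  have key := key_ineq N l hl2
  have hid : (N.choose (l + 2) : ℚ) * ((l : ℚ) + 2)
      = (N.choose (l + 1) : ℚ) * ((N - (l + 1) : ℕ) : ℚ) := by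
    have := Nat.choose_succ_right_eq N (l + 1)
    exact_mod_cast this
  have hm : (0 : ℚ) < ((N - (l + 1) : ℕ) : ℚ) := by
    have : 0 < N - (l + 1) := by omega
    exact_mod_cast this
  set S1 := ∑ B ∈ (Finset.univ : Finset (Fin N)).powersetCard (l + 1 + 1), (maxGap B : ℚ)
  set S0 := ∑ A ∈ (Finset.univ : Finset (Fin N)).powersetCard (l + 1), (maxGap A : ℚ)
  have key' : ((l : ℚ) + 2) * S1 ≤ ((N - (l + 1) : ℕ) : ℚ) * S0 := key
  have h2 : S1 * (N.choose (l + 1) : ℚ) * ((N - (l + 1) : ℕ) : ℚ)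
      ≤ S0 * (N.choose (l + 2) : ℚ) * ((N - (l + 1) : ℕ) : ℚ) := by
    calc S1 * (N.choose (l + 1) : ℚ) * ((N - (l + 1) : ℕ) : ℚ)
        = S1 * ((N.choose (l + 1) : ℚ) * ((N - (l + 1) : ℕ) : ℚ)) := by ring
      _ = S1 * ((N.choose (l + 2) : ℚ) * ((l : ℚ) + 2)) := by rw [← hid]
      _ = (N.choose (l + 2) : ℚ) * (((l : ℚ) + 2) * S1) := by ring
      _ ≤ (N.choose (l + 2) : ℚ) * (((N - (l + 1) : ℕ) : ℚ) * S0) :=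
          mul_le_mul_of_nonneg_left key' (le_of_lt hq2)
      _ = S0 * (N.choose (l + 2) : ℚ) * ((N - (l + 1) : ℕ) : ℚ) := by ring
  exact le_of_mul_le_mul_right h2 hm


end
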